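/- arXiv:math/0302236 — 2 statements merged into one kernel-verified Lean document; each statement's English description precedes it below -/
import Mathlib

section
/- Let Δ be a fan in V of the form Δ = St(ρ) for a 1-dimensional cone ρ with ρ in the interior Δ⁰, let p: V → V̄ = V/⟨ρ⟩ be the projection and Φ = p(∂Δ) the induced complete fan in V̄. Let x_n be a linear function on V positive on ρ⁰ and let ψ = x_n − f where f is the piecewise linear function on Φ whose graph is ∂Δ. Then for any simplicial such Δ and the Brion functionals ζ on Δ (w.r.t. Ω_V) and ζ̄ on Φ (w.r.t. Ω_V̄ with Ω_V = dx_n ∧ Ω_V̄), one has ζ̄(g) = ζ(ψ·p*g) for every piecewise polynomial function g on Φ. -/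
open Set

variable {V : Type} [AddCommGroup V] [Module ℝ V]

/-- A polyhedral cone: a finite intersection of closed halfspaces `{L ≥ 0}`. -/
def IsPolyCone (σ : Set V) : Prop :=
  ∃ S : Finset (V →ₗ[ℝ] ℝ), σ = {v | ∀ L ∈ S, 0 ≤ L v}

/-- `τ` is a face of the cone `σ`. -/
def IsFaceOf (τ σ : Set V) : Prop :=
  ∃ L : V →ₗ[ℝ] ℝ, (∀ v ∈ σ, 0 ≤ L v) ∧ τ = {v ∈ σ | L v = 0}

/-- The dimension of a cone: the dimension of its linear span. -/
noncomputable def coneDim (σ : Set V) : ℕ :=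
  Module.finrank ℝ (Submodule.span ℝ σ)

/-- A fan: a finite collection of polyhedral cones, closed under taking faces, such
that the intersection of two cones is a face of each, containing the zero cone. -/
structure Fan (V : Type) [AddCommGroup V] [Module ℝ V] where
  cones : Finset (Set V)
  poly : ∀ σ ∈ cones, IsPolyCone σ
  face_mem : ∀ σ ∈ cones, ∀ τ : Set V, IsFaceOf τ σ → τ ∈ cones
  inter_face : ∀ σ ∈ cones, ∀ τ ∈ cones, IsFaceOf (σ ∩ τ) σ
  zero_mem : ({0} : Set V) ∈ cones

/-- The support of a fan. -/
def Fan.support (Φ : Fan V) : Set V := ⋃ σ ∈ Φ.cones, σ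

/-- A fan is complete if its support is all of `V`. -/
def Fan.IsComplete (Φ : Fan V) : Prop := Φ.support = univ

/-- A cone is simplicial if it is the convex hull of `coneDim σ` many rays spanned
by linearly independent vectors. -/
def IsSimplicialCone (σ : Set V) : Prop :=
  ∃ f : Fin (coneDim σ) → V, LinearIndependent ℝ f ∧
    σ = {v | ∃ c : Fin (coneDim σ) → ℝ, (∀ i, 0 ≤ c i) ∧ v = ∑ i, c i • f i}

def Fan.IsSimplicial (Φ : Fan V) : Prop := ∀ σ ∈ Φ.cones, IsSimplicialCone σ

/-- An edge of a cone: a 1-dimensional face. -/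
def IsEdge (ρ σ : Set V) : Prop := IsFaceOf ρ σ ∧ coneDim ρ = 1

/-- Minkowski sum of two subsets. -/
def setAdd (σ τ : Set V) : Set V := {x | ∃ a ∈ σ, ∃ b ∈ τ, x = a + b}

/-- An edge `ρ` of `σ` is free if all other edges of `σ` are contained in one facet
`τ`, and `σ = τ + ρ`. -/
def IsFreeEdge (ρ σ : Set V) : Prop :=
  IsEdge ρ σ ∧ ∃ τ : Set V, IsFaceOf τ σ ∧ coneDim τ = coneDim σ - 1 ∧
    (∀ ρ' : Set V, IsEdge ρ' σ → ρ' ≠ ρ → ρ' ⊆ τ) ∧ σ = setAdd τ ρ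

/-- A cone is deficient if it has no free edge. -/
def IsDeficient (σ : Set V) : Prop := ¬ ∃ ρ : Set V, IsFreeEdge ρ σ

/-- The singular subfan `Φˢ`: the (cones of the) minimal subfan of `Φ` containing
all deficient cones of `Φ`. -/
def Fan.singular (Φ : Fan V) : Set (Set V) :=
  {σ | σ ∈ Φ.cones ∧ ∃ τ ∈ Φ.cones, IsDeficient τ ∧ IsFaceOf σ τ}

/-- The star of a cone `σ` in the fan `Φ`. -/
def Fan.star (Φ : Fan V) (σ : Set V) : Set (Set V) := {τ | τ ∈ Φ.cones ∧ σ ⊆ τ}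

/-- `[St(σ)]`: the minimal subfan containing the star of `σ`. -/
def Fan.closedStar (Φ : Fan V) (σ : Set V) : Set (Set V) :=
  {ξ | ∃ τ ∈ Φ.star σ, IsFaceOf ξ τ}

/-- `∂St(σ)`. -/
def Fan.boundaryStar (Φ : Fan V) (σ : Set V) : Set (Set V) :=
  Φ.closedStar σ \ Φ.star σ

/-- The link of a cone. -/
def Fan.link (Φ : Fan V) (σ : Set V) : Set (Set V) :=
  {τ | τ ∈ Φ.boundaryStar σ ∧ τ ∩ σ = {0}}

/-- The relative interior `σ⁰` of a cone: the complement of its proper faces. -/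
def coneInt (σ : Set V) : Set V :=
  σ \ ⋃ τ ∈ {τ : Set V | IsFaceOf τ σ ∧ τ ≠ σ}, τ

/-- `l` is piecewise linear with respect to `Φ`. -/
def IsPWLinear (Φ : Fan V) (l : V → ℝ) : Prop :=
  ∀ σ ∈ Φ.cones, ∃ L : V →ₗ[ℝ] ℝ, ∀ v ∈ σ, l v = L v

/-- `l` is strictly convex on the complete fan `Φ`: for any two distinct
top-dimensional cones `σ, τ` the linear function agreeing with `l` on `σ` is
strictly smaller than `l` on the interior of `τ`. -/
def IsStrictlyConvex (Φ : Fan V) (l : V → ℝ) : Prop :=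
  IsPWLinear Φ l ∧
  ∀ σ ∈ Φ.cones, coneDim σ = Module.finrank ℝ V →
    ∀ L : V →ₗ[ℝ] ℝ, (∀ v ∈ σ, l v = L v) →
      ∀ τ ∈ Φ.cones, coneDim τ = Module.finrank ℝ V → τ ≠ σ →
        ∀ v ∈ coneInt τ, L v < l v

open scoped Classical

/-- The linear polynomial in `A = Sym(V*) ≅ ℝ[X₁,...,Xₙ]` corresponding to a linear
form `ℓ` on `V = ℝⁿ`. -/
noncomputable def linPoly {n : ℕ} (ℓ : (Fin n → ℝ) →ₗ[ℝ] ℝ) :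
    MvPolynomial (Fin n) ℝ :=
  ∑ j, MvPolynomial.C (ℓ (Pi.single j 1)) * MvPolynomial.X j

/-- `𝓕_σ`: the product of the (equations of the) facets of a simplicial
`n`-dimensional cone `σ` with normalized equations `L`. -/
noncomputable def facetProd {n : ℕ} (L : Fin n → ((Fin n → ℝ) →ₗ[ℝ] ℝ)) :
    MvPolynomial (Fin n) ℝ :=
  ∏ i, linPoly (L i)

/-- `L` is the normalized family of facet equations of the simplicial
`n`-dimensional cone `σ`: the `L i` are nonnegative exactly on `σ`, and their wedge
product is `±Ω` for the standard volume form `Ω` (i.e. `|det L| = 1`). -/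
def IsNormalizedEquations {n : ℕ} (σ : Set (Fin n → ℝ))
    (L : Fin n → ((Fin n → ℝ) →ₗ[ℝ] ℝ)) : Prop :=
  σ = {v | ∀ i, 0 ≤ L i v} ∧
    |(Matrix.of fun i j => L i (Pi.single j 1)).det| = 1

section AuxLemmas
open MvPolynomial


private lemma mv_zero_of_boxes : ∀ {n : ℕ} (p : MvPolynomial (Fin n) ℝ) (s : Fin n → Set ℝ),
    (∀ i, (s i).Infinite) → (∀ x : Fin n → ℝ, (∀ i, x i ∈ s i) → eval x p = 0) → p = 0 := by
  intro n
  induction n with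
  | zero =>
    intro p s _ h
    apply (MvPolynomial.isEmptyRingEquiv ℝ (Fin 0)).injective
    rw [RingEquiv.map_zero]
    have := h finZeroElim (fun i => i.elim0)
    convert this
    conv_rhs => rw [← (isEmptyRingEquiv ℝ (Fin 0)).symm_apply_apply p, isEmptyRingEquiv_symm_apply, eval_C]
  | succ n ih =>
    intro p s hs h
    apply (finSuccEquiv ℝ n).injective
    simp only [map_zero]
    ext k : 1
    rw [Polynomial.coeff_zero]
    apply ih _ (fun i => s i.succ) (fun i => hs i.succ)
    intro x hx
    have hQ : Polynomial.map (eval x) (finSuccEquiv ℝ n p) = 0 := by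
      apply Polynomial.eq_zero_of_infinite_isRoot
      apply (hs 0).mono
      intro y hy
      have : eval (Fin.cons y x : Fin (n+1) → ℝ) p = 0 := by
        apply h
        intro i
        refine Fin.cases ?_ ?_ i
        · simpa using hy
        · intro j; simpa using hx j
      simpa [Polynomial.IsRoot, ← eval_eq_eval_mv_eval'] using this
    have := congrArg (fun q => Polynomial.coeff q k) hQ
    simpa [Polynomial.coeff_map] using this

lemma mv_zero_of_open {n : ℕ} {p : MvPolynomial (Fin n) ℝ} {U : Set (Fin n → ℝ)}
    (hU : IsOpen U) (hne : U.Nonempty) (h : ∀ v ∈ U, eval v p = 0) : p = 0 := by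
  obtain ⟨x₀, hx₀⟩ := hne
  obtain ⟨ε, hε, hball⟩ := Metric.isOpen_iff.1 hU x₀ hx₀
  apply mv_zero_of_boxes p (fun i => Set.Ioo (x₀ i - ε/2) (x₀ i + ε/2))
  · intro i
    have hlt : x₀ i - ε/2 < x₀ i + ε/2 := by linarith
    exact Set.Ioo_infinite hlt
  · intro x hx
    apply h
    apply hball
    rw [Metric.mem_ball, dist_pi_lt_iff hε]
    intro i
    rw [Real.dist_eq, abs_lt]
    have := hx i
    simp only [Set.mem_Ioo] at this
    constructor <;> linarith [this.1, this.2]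


lemma linmap_apply_eq_sum {n : ℕ} (ℓ : (Fin n → ℝ) →ₗ[ℝ] ℝ) (x : Fin n → ℝ) :
    ℓ x = ∑ j, x j * ℓ (Pi.single j 1) := by
  have h := LinearMap.pi_apply_eq_sum_univ ℓ x
  have : ∀ j : Fin n, (fun k => if j = k then (1:ℝ) else 0) = Pi.single j 1 := by
    intro j; funext k; simp [Pi.single_apply, eq_comm]
  simp only [this, smul_eq_mul] at h
  exact h

lemma eval_linPoly {n : ℕ} (ℓ : (Fin n → ℝ) →ₗ[ℝ] ℝ) (x : Fin n → ℝ) :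
    eval x (linPoly ℓ) = ℓ x := by
  rw [linmap_apply_eq_sum]
  simp [linPoly, mul_comm]

lemma eval_facetProd {n : ℕ} (L : Fin n → ((Fin n → ℝ) →ₗ[ℝ] ℝ)) (x : Fin n → ℝ) :
    eval x (facetProd L) = ∏ i, L i x := by
  simp [facetProd, eval_linPoly]

lemma exists_pos_point {n : ℕ} {σ : Set (Fin n → ℝ)} {L : Fin n → ((Fin n → ℝ) →ₗ[ℝ] ℝ)}
    (hN : IsNormalizedEquations σ L) : ∃ v : Fin n → ℝ, ∀ i, 0 < L i v := by
  set N : Matrix (Fin n) (Fin n) ℝ := Matrix.of fun i j => L i (Pi.single j 1) with hNdef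
  have hdet : N.det ≠ 0 := by
    intro h0
    have := hN.2
    rw [← hNdef] at this
    rw [h0] at this
    simpa using this
  have hinv : IsUnit N.det := isUnit_iff_ne_zero.2 hdet
  refine ⟨N⁻¹.mulVec 1, ?_⟩
  intro i
  have key : L i (N⁻¹.mulVec 1) = (N.mulVec (N⁻¹.mulVec 1)) i := by
    rw [linmap_apply_eq_sum]
    simp [Matrix.mulVec, dotProduct, hNdef, mul_comm]
  rw [key, Matrix.mulVec_mulVec, Matrix.mul_nonsing_inv _ (isUnit_iff_ne_zero.2 hdet)]
  simp

lemma eq_of_eval_eq_on_cone {n : ℕ} {σ : Set (Fin n → ℝ)} {L : Fin n → ((Fin n → ℝ) →ₗ[ℝ] ℝ)}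
    (hN : IsNormalizedEquations σ L) {p q : MvPolynomial (Fin n) ℝ}
    (h : ∀ v ∈ σ, eval v p = eval v q) : p = q := by
  obtain ⟨v₀, hv₀⟩ := exists_pos_point hN
  set U : Set (Fin n → ℝ) := ⋂ i, {v | 0 < L i v} with hU
  have hUopen : IsOpen U := by
    apply isOpen_iInter_of_finite
    intro i
    exact isOpen_lt continuous_const (L i).continuous_of_finiteDimensional
  have hUne : U.Nonempty := ⟨v₀, by simp only [hU, Set.mem_iInter, Set.mem_setOf_eq]; exact hv₀⟩
  have hUσ : U ⊆ σ := by
    intro v hv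
    rw [hN.1]
    intro i
    have hv' : ∀ j, 0 < L j v := by simpa only [hU, Set.mem_iInter, Set.mem_setOf_eq] using hv
    exact le_of_lt (hv' i)
  rw [← sub_eq_zero]
  apply mv_zero_of_open hUopen hUne
  intro v hv
  rw [map_sub, sub_eq_zero]
  exact h v (hUσ hv)
lemma monomial_of_nonneg_inv {n : ℕ} {A B : Matrix (Fin n) (Fin n) ℝ}
    (hA : ∀ i k, 0 ≤ A i k) (hB : ∀ i k, 0 ≤ B i k)
    (hAB : A * B = 1) (hBA : B * A = 1) :
    ∃ (π : Equiv.Perm (Fin n)) (d : Fin n → ℝ), (∀ i, 0 < d i) ∧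
      (∀ i k, A i k = if k = π i then d i else 0) := by
  -- off-diagonal entries of products vanish termwise
  have hABz : ∀ i j, i ≠ j → ∀ k, A i k * B k j = 0 := by
    intro i j hij k
    have h0 : ∑ k, A i k * B k j = 0 := by
      have := congrFun (congrFun hAB i) j
      rw [Matrix.mul_apply] at this
      rw [this, Matrix.one_apply_ne hij]
    have := (Finset.sum_eq_zero_iff_of_nonneg (fun k _ => mul_nonneg (hA i k) (hB k j))).1 h0
    exact this k (Finset.mem_univ k)
  have hBAz : ∀ i j, i ≠ j → ∀ k, B i k * A k j = 0 := by
    intro i j hij k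
    have h0 : ∑ k, B i k * A k j = 0 := by
      have := congrFun (congrFun hBA i) j
      rw [Matrix.mul_apply] at this
      rw [this, Matrix.one_apply_ne hij]
    have := (Finset.sum_eq_zero_iff_of_nonneg (fun k _ => mul_nonneg (hB i k) (hA k j))).1 h0
    exact this k (Finset.mem_univ k)
  -- for each i, a column k₀ with A i k₀ > 0, B k₀ i > 0
  have hex : ∀ i, ∃ k₀, 0 < A i k₀ ∧ 0 < B k₀ i ∧ ∀ k, k ≠ k₀ → A i k = 0 := by
    intro i
    have h1 : ∑ k, A i k * B k i = 1 := by
      have := congrFun (congrFun hAB i) i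
      rw [Matrix.mul_apply] at this
      rw [this, Matrix.one_apply_eq]
    obtain ⟨k₀, -, hk₀⟩ := Finset.exists_ne_zero_of_sum_ne_zero (by rw [h1]; exact one_ne_zero)
    have hAik : 0 < A i k₀ := lt_of_le_of_ne (hA i k₀) (by
      intro h; exact hk₀ (by rw [← h]; ring))
    have hBki : 0 < B k₀ i := lt_of_le_of_ne (hB k₀ i) (by
      intro h; exact hk₀ (by rw [← h]; ring))
    refine ⟨k₀, hAik, hBki, ?_⟩
    intro k hk
    by_contra hne
    have hAik' : 0 < A i k := lt_of_le_of_ne (hA i k) (Ne.symm hne)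
    -- B k₀ j = 0 for j ≠ i
    have hBk₀ : ∀ j, j ≠ i → B k₀ j = 0 := by
      intro j hj
      have := hABz i j (Ne.symm hj) k₀
      rcases mul_eq_zero.1 this with h | h
      · exact absurd h (ne_of_gt hAik)
      · exact h
    -- (B*A) k₀ k = 0 reduces to B k₀ i * A i k = 0
    have := hBAz k₀ k (Ne.symm hk) i
    rcases mul_eq_zero.1 this with h | h
    · exact absurd h (ne_of_gt hBki)
    · exact absurd h (ne_of_gt hAik')
  choose π₀ hπA hπB hπz using hex
  have hinj : Function.Injective π₀ := by
    intro i i' hii'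
    by_contra hne
    have h1 := hABz i i' hne (π₀ i)
    rcases mul_eq_zero.1 h1 with h | h
    · exact absurd h (ne_of_gt (hπA i))
    · rw [hii'] at h
      exact absurd h (ne_of_gt (hπB i'))
  let π : Equiv.Perm (Fin n) := Equiv.ofBijective π₀ (Finite.injective_iff_bijective.1 hinj)
  refine ⟨π, fun i => A i (π₀ i), fun i => hπA i, ?_⟩
  intro i k
  by_cases hk : k = π i
  · have : (π : Fin n → Fin n) i = π₀ i := rfl
    rw [if_pos hk, hk, this]
  · rw [if_neg hk]
    apply hπz
    intro h
    exact hk (by rw [h]; rfl)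

lemma linPoly_smul_perm {n : ℕ} (ℓ ℓ' : (Fin n → ℝ) →ₗ[ℝ] ℝ) (c : ℝ)
    (h : ∀ j, ℓ (Pi.single j 1) = c * ℓ' (Pi.single j 1)) :
    linPoly ℓ = MvPolynomial.C c * linPoly ℓ' := by
  simp only [linPoly, Finset.mul_sum, h, map_mul]
  apply Finset.sum_congr rfl
  intro j _
  ring

lemma facetProd_unique {n : ℕ} {σ : Set (Fin n → ℝ)}
    {L M : Fin n → ((Fin n → ℝ) →ₗ[ℝ] ℝ)}
    (hL : IsNormalizedEquations σ L) (hM : IsNormalizedEquations σ M) :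
    facetProd L = facetProd M := by
  classical
  set Lm : Matrix (Fin n) (Fin n) ℝ := Matrix.of fun i j => L i (Pi.single j 1) with hLm
  set Mm : Matrix (Fin n) (Fin n) ℝ := Matrix.of fun i j => M i (Pi.single j 1) with hMm
  have hLdet : Lm.det ≠ 0 := by
    intro h0; have := hL.2; rw [← hLm, h0] at this; simpa using this
  have hMdet : Mm.det ≠ 0 := by
    intro h0; have := hM.2; rw [← hMm, h0] at this; simpa using this
  have hLu : IsUnit Lm.det := isUnit_iff_ne_zero.2 hLdet
  have hMu : IsUnit Mm.det := isUnit_iff_ne_zero.2 hMdet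
  set A := Mm * Lm⁻¹ with hA
  set B := Lm * Mm⁻¹ with hB
  have hAB : A * B = 1 := by
    rw [hA, hB, Matrix.mul_assoc, ← Matrix.mul_assoc Lm⁻¹,
      Matrix.nonsing_inv_mul _ hLu, Matrix.one_mul, Matrix.mul_nonsing_inv _ hMu]
  have hBA : B * A = 1 := by
    rw [hA, hB, Matrix.mul_assoc, ← Matrix.mul_assoc Mm⁻¹,
      Matrix.nonsing_inv_mul _ hMu, Matrix.one_mul, Matrix.mul_nonsing_inv _ hLu]
  have key : ∀ (P Q : Matrix (Fin n) (Fin n) ℝ),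
      P.det ≠ 0 →
      (∀ v : Fin n → ℝ, (∀ i, 0 ≤ P.mulVec v i) → (∀ i, 0 ≤ Q.mulVec v i)) →
      ∀ i k, 0 ≤ (Q * P⁻¹) i k := by
    intro P Q hPdet hPQ i k
    have := hPQ (P⁻¹.mulVec (Pi.single k 1)) ?_ i
    · rw [Matrix.mulVec_mulVec] at this
      rw [Matrix.mulVec_single] at this
      simpa using this
    · intro j
      rw [Matrix.mulVec_mulVec, Matrix.mul_nonsing_inv _ (isUnit_iff_ne_zero.2 hPdet)]
      simp only [Matrix.one_mulVec]
      by_cases hjk : j = k <;> simp [hjk, Pi.single_apply]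
  have hmemL : ∀ v : Fin n → ℝ, v ∈ σ ↔ ∀ i, 0 ≤ Lm.mulVec v i := by
    intro v
    have heval : ∀ i, L i v = Lm.mulVec v i := fun i => by
      rw [linmap_apply_eq_sum]; simp [Matrix.mulVec, dotProduct, hLm, mul_comm]
    rw [hL.1]
    simp only [Set.mem_setOf_eq, heval]
  have hmemM : ∀ v : Fin n → ℝ, v ∈ σ ↔ ∀ i, 0 ≤ Mm.mulVec v i := by
    intro v
    have heval : ∀ i, M i v = Mm.mulVec v i := fun i => by
      rw [linmap_apply_eq_sum]; simp [Matrix.mulVec, dotProduct, hMm, mul_comm]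
    rw [hM.1]
    simp only [Set.mem_setOf_eq, heval]
  have hApos : ∀ i k, 0 ≤ A i k :=
    key Lm Mm hLdet (fun v hv => (hmemM v).1 ((hmemL v).2 hv))
  have hBpos : ∀ i k, 0 ≤ B i k :=
    key Mm Lm hMdet (fun v hv => (hmemL v).1 ((hmemM v).2 hv))
  obtain ⟨π, d, hd, hAd⟩ := monomial_of_nonneg_inv hApos hBpos hAB hBA
  -- Mm = A * Lm
  have hMA : Mm = A * Lm := by
    rw [hA, Matrix.mul_assoc, Matrix.nonsing_inv_mul _ hLu, Matrix.mul_one]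
  have hMrow : ∀ i j, Mm i j = d i * Lm (π i) j := by
    intro i j
    have : Mm i j = ∑ k, A i k * Lm k j := by rw [hMA, Matrix.mul_apply]
    rw [this, Finset.sum_eq_single (π i)]
    · rw [hAd i (π i), if_pos rfl]
    · intro k _ hk
      rw [hAd i k, if_neg hk, zero_mul]
    · intro h; exact absurd (Finset.mem_univ _) h
  -- product of scalars is 1
  have hdet1 : ∏ i, d i = 1 := by
    have hAdiag : A = Matrix.diagonal d * (Equiv.Perm.permMatrix ℝ π) := by
      ext i k
      rw [Matrix.diagonal_mul, hAd i k]
      by_cases hk : k = π i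
      · simp [hk, Equiv.Perm.permMatrix, PEquiv.toMatrix, Equiv.toPEquiv]
      · simp [hk, Equiv.Perm.permMatrix, PEquiv.toMatrix, Equiv.toPEquiv, Ne.symm hk]
    have hdetA : |A.det| = 1 := by
      have h1 : A.det = Mm.det * Lm⁻¹.det := by rw [hA, Matrix.det_mul]
      have h2 : Lm⁻¹.det = Lm.det⁻¹ := by
        rw [Matrix.det_nonsing_inv, Ring.inverse_eq_inv']
      rw [h1, h2, abs_mul, abs_inv]
      have := hM.2; rw [← hMm] at this; rw [this]
      have := hL.2; rw [← hLm] at this; rw [this]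
      norm_num
    rw [hAdiag, Matrix.det_mul, Matrix.det_diagonal, Matrix.det_permutation] at hdetA
    have hsign : |((Equiv.Perm.sign π : ℤ) : ℝ)| = 1 := by
      rcases Int.units_eq_one_or (Equiv.Perm.sign π) with h | h <;> rw [h] <;> norm_num
    rw [abs_mul, hsign, mul_one, abs_of_nonneg (Finset.prod_nonneg (fun i _ => le_of_lt (hd i)))] at hdetA
    exact hdetA
  -- conclude
  have hfM : ∀ i, linPoly (M i) = MvPolynomial.C (d i) * linPoly (L (π i)) := by
    intro i
    apply linPoly_smul_perm
    intro j
    exact hMrow i j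
  calc facetProd L = MvPolynomial.C (∏ i, d i) * facetProd L := by
        rw [hdet1, map_one, one_mul]
    _ = (∏ i, MvPolynomial.C (d i)) * ∏ i, linPoly (L (π i)) := by
        rw [map_prod, facetProd, Equiv.prod_comp π (fun k => linPoly (L k))]
    _ = ∏ i, (MvPolynomial.C (d i) * linPoly (L (π i))) := by
        rw [Finset.prod_mul_distrib]
    _ = facetProd M := by
        rw [facetProd]
        exact Finset.prod_congr rfl (fun i _ => (hfM i).symm)

lemma homog_one_linear {k : ℕ} {p : MvPolynomial (Fin k) ℝ}
    (hp : p.IsHomogeneous 1) :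
    ∃ ℓ : (Fin k → ℝ) →ₗ[ℝ] ℝ, ∀ v, MvPolynomial.eval v p = ℓ v := by
  classical
  refine ⟨∑ j, (MvPolynomial.coeff (Finsupp.single j 1) p) • (LinearMap.proj j), ?_⟩
  intro v
  have hsupp : ∀ d ∈ p.support, ∃ j, d = Finsupp.single j 1 := by
    intro d hd
    have hdeg : ∑ i ∈ d.support, d i = 1 := by
      have := hp (MvPolynomial.mem_support_iff.1 hd)
      simpa [Finsupp.weight_apply, Finsupp.sum] using this
    have hne : d.support.Nonempty := by
      by_contra h
      rw [Finset.not_nonempty_iff_eq_empty] at h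
      rw [h] at hdeg
      simp at hdeg
    obtain ⟨j, hj⟩ := hne
    have hd1 : ∀ i ∈ d.support, 1 ≤ d i := by
      intro i hi
      exact Nat.one_le_iff_ne_zero.2 (Finsupp.mem_support_iff.1 hi)
    have hcard : d.support.card ≤ 1 := by
      have : d.support.card • 1 ≤ ∑ i ∈ d.support, d i := Finset.card_nsmul_le_sum _ _ _ hd1
      simpa [hdeg] using this
    have hcard1 : d.support = {j} := by
      apply Finset.eq_singleton_iff_unique_mem.2
      refine ⟨hj, ?_⟩
      intro y hy
      by_contra hne'
      have : 2 ≤ d.support.card := Finset.one_lt_card.2 ⟨y, hy, j, hj, hne'⟩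
      omega
    refine ⟨j, ?_⟩
    have hdj : d j = 1 := by
      rw [← hdeg, hcard1, Finset.sum_singleton]
    have := Finsupp.support_eq_singleton.1 hcard1
    rw [this.2, hdj]
  rw [MvPolynomial.eval_eq']
  have himg : p.support ⊆ Finset.univ.image (fun j => Finsupp.single j (1:ℕ)) := by
    intro d hd
    obtain ⟨j, rfl⟩ := hsupp d hd
    exact Finset.mem_image.2 ⟨j, Finset.mem_univ j, rfl⟩
  rw [Finset.sum_subset himg ?zero]
  case zero =>
    intro d _ hd
    rw [MvPolynomial.notMem_support_iff.1 hd, zero_mul]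
  rw [Finset.sum_image ?inj]
  case inj =>
    intro a _ b _ hab
    exact Finsupp.single_left_injective one_ne_zero hab
  simp only [LinearMap.sum_apply, LinearMap.smul_apply, LinearMap.proj_apply, smul_eq_mul]
  apply Finset.sum_congr rfl
  intro j _
  congr 1
  rw [Finset.prod_eq_single j]
  · simp
  · intro i _ hij
    simp [Finsupp.single_apply, Ne.symm hij]
  · intro h; exact absurd (Finset.mem_univ _) h

noncomputable def snoc0 {m : ℕ} : (Fin m → ℝ) →ₗ[ℝ] (Fin (m+1) → ℝ) where
  toFun w := Fin.snoc w 0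
  map_add' a b := by
    funext i
    refine Fin.lastCases ?_ ?_ i <;> simp
  map_smul' c a := by
    funext i
    refine Fin.lastCases ?_ ?_ i <;> simp

lemma snoc0_apply {m : ℕ} (w : Fin m → ℝ) : (snoc0 w : Fin (m+1) → ℝ) = Fin.snoc w 0 := rfl

lemma dim_upper {m : ℕ} {τ : Set (Fin m → ℝ)} {f : (Fin m → ℝ) → ℝ}
    (h0 : (0:Fin m → ℝ) ∈ τ) (hf0 : f 0 = 0) (hτ : coneDim τ = m) :
    coneDim {v : Fin (m+1) → ℝ | (fun i => v i.castSucc) ∈ τ ∧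
      f (fun i => v i.castSucc) ≤ v (Fin.last m)} = m + 1 := by
  set σ : Set (Fin (m+1) → ℝ) := {v | (fun i => v i.castSucc) ∈ τ ∧
      f (fun i => v i.castSucc) ≤ v (Fin.last m)} with hσ
  have hspanτ : Submodule.span ℝ τ = ⊤ := by
    apply Submodule.eq_top_of_finrank_eq
    exact hτ.trans (by simp : Module.finrank ℝ (Fin m → ℝ) = m).symm
  have hel : (Pi.single (Fin.last m) 1 : Fin (m+1) → ℝ) ∈ σ := by
    have hpr : (fun i : Fin m => (Pi.single (Fin.last m) (1:ℝ) : Fin (m+1) → ℝ) i.castSucc)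
        = (0 : Fin m → ℝ) := by
      funext i
      simp [Pi.single_apply, (Fin.castSucc_lt_last i).ne]
    constructor
    · rw [hpr]; exact h0
    · rw [hpr, hf0]; simp
  have hg : ∀ w ∈ τ, (Fin.snoc w (f w) : Fin (m+1) → ℝ) ∈ σ := by
    intro w hw
    have hpr : (fun i : Fin m => (Fin.snoc w (f w) : Fin (m+1) → ℝ) i.castSucc) = w := by
      funext i; simp
    constructor
    · rw [hpr]; exact hw
    · rw [hpr]; simp
  have hsnoc0 : ∀ w ∈ τ, (snoc0 w : Fin (m+1) → ℝ) ∈ Submodule.span ℝ σ := by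
    intro w hw
    have heq : (snoc0 w : Fin (m+1) → ℝ)
        = (Fin.snoc w (f w) : Fin (m+1) → ℝ) - f w • (Pi.single (Fin.last m) 1 : Fin (m+1) → ℝ) := by
      funext i
      refine Fin.lastCases ?_ ?_ i <;>
        simp [snoc0_apply, Pi.single_apply, (Fin.castSucc_lt_last _).ne]
    rw [heq]
    exact Submodule.sub_mem _ (Submodule.subset_span (hg w hw))
      (Submodule.smul_mem _ _ (Submodule.subset_span hel))
  have hmap : ∀ w : Fin m → ℝ, (snoc0 w : Fin (m+1) → ℝ) ∈ Submodule.span ℝ σ := by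
    intro w
    have h1 : snoc0 w ∈ Submodule.map snoc0 (Submodule.span ℝ τ) :=
      ⟨w, by rw [hspanτ]; trivial, rfl⟩
    rw [Submodule.map_span] at h1
    refine Submodule.span_le.2 ?_ h1
    rintro x ⟨w', hw', rfl⟩
    exact hsnoc0 w' hw'
  have h1 : Submodule.span ℝ σ = ⊤ := by
    rw [eq_top_iff]
    intro u _
    have hu : u = (snoc0 (fun i => u i.castSucc) : Fin (m+1) → ℝ)
        + u (Fin.last m) • (Pi.single (Fin.last m) 1 : Fin (m+1) → ℝ) := by
      funext i
      refine Fin.lastCases ?_ ?_ i <;>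
        simp [snoc0_apply, Pi.single_apply, (Fin.castSucc_lt_last _).ne]
    rw [hu]
    exact Submodule.add_mem _ (hmap _)
      (Submodule.smul_mem _ _ (Submodule.subset_span hel))
  rw [coneDim, h1, finrank_top]; simp

lemma dim_le_of_proj {m : ℕ} {σ : Set (Fin (m+1) → ℝ)} {τ : Set (Fin m → ℝ)}
    (h : ∀ v ∈ σ, (fun i => v i.castSucc) ∈ τ) (hσ : coneDim σ = m + 1) :
    coneDim τ = m := by
  have hs : Submodule.span ℝ σ = ⊤ := by
    apply Submodule.eq_top_of_finrank_eq
    exact hσ.trans (by simp : Module.finrank ℝ (Fin (m+1) → ℝ) = m + 1).symm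
  have hτtop : Submodule.span ℝ τ = ⊤ := by
    rw [eq_top_iff]
    intro w _
    have h1 : w ∈ Submodule.map (LinearMap.funLeft ℝ ℝ (Fin.castSucc : Fin m → Fin (m+1)))
        (Submodule.span ℝ σ) := by
      refine ⟨snoc0 w, by rw [hs]; trivial, ?_⟩
      funext i
      simp [LinearMap.funLeft_apply, snoc0_apply]
    rw [Submodule.map_span] at h1
    refine Submodule.span_le.2 ?_ h1
    rintro x ⟨v, hv, rfl⟩
    exact Submodule.subset_span (h v hv)
  rw [coneDim, hτtop, finrank_top]; simp

lemma dim_graph_ne {m : ℕ} {τ : Set (Fin m → ℝ)} {f : (Fin m → ℝ) → ℝ}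
    (ℓ : (Fin m → ℝ) →ₗ[ℝ] ℝ) (hfℓ : ∀ w ∈ τ, f w = ℓ w) :
    coneDim {v : Fin (m+1) → ℝ | (fun i => v i.castSucc) ∈ τ ∧
      v (Fin.last m) = f (fun i => v i.castSucc)} ≠ m + 1 := by
  intro hdim
  set φ : (Fin (m+1) → ℝ) →ₗ[ℝ] ℝ :=
    (LinearMap.proj (Fin.last m)) - ℓ.comp (LinearMap.funLeft ℝ ℝ Fin.castSucc) with hφ
  have hker : {v : Fin (m+1) → ℝ | (fun i => v i.castSucc) ∈ τ ∧
      v (Fin.last m) = f (fun i => v i.castSucc)} ⊆ (LinearMap.ker φ : Set _) := by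
    intro v hv
    have h2 := hv.2
    rw [hfℓ _ hv.1] at h2
    simp only [SetLike.mem_coe, LinearMap.mem_ker, hφ, LinearMap.sub_apply,
      LinearMap.proj_apply, LinearMap.comp_apply, LinearMap.funLeft_apply]
    rw [sub_eq_zero]
    exact h2
  have hsp : Submodule.span ℝ {v : Fin (m+1) → ℝ | (fun i => v i.castSucc) ∈ τ ∧
      v (Fin.last m) = f (fun i => v i.castSucc)} = ⊤ := by
    apply Submodule.eq_top_of_finrank_eq
    exact hdim.trans (by simp : Module.finrank ℝ (Fin (m+1) → ℝ) = m + 1).symm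
  have hletop : (⊤ : Submodule ℝ (Fin (m+1) → ℝ)) ≤ LinearMap.ker φ := by
    rw [← hsp]
    exact Submodule.span_le.2 hker
  have hφ0 : φ = 0 := LinearMap.ker_eq_top.1 (top_le_iff.1 hletop)
  have hval : φ (Pi.single (Fin.last m) 1) = 1 := by
    have hpr : ((Pi.single (Fin.last m) (1:ℝ) : Fin (m+1) → ℝ) ∘ Fin.castSucc) = 0 := by
      funext i
      simp [Pi.single_apply, (Fin.castSucc_lt_last i).ne]
    have hz : (LinearMap.funLeft ℝ ℝ (Fin.castSucc : Fin m → Fin (m+1)))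
        (Pi.single (Fin.last m) 1) = 0 := hpr
    simp only [hφ, LinearMap.sub_apply, LinearMap.proj_apply, LinearMap.comp_apply, hz, map_zero]
    simp
  rw [hφ0] at hval
  simp at hval

lemma single_castSucc_comp {m : ℕ} (j : Fin m) :
    (fun i : Fin m => (Pi.single (Fin.castSucc j) (1:ℝ) : Fin (m+1) → ℝ) (Fin.castSucc i))
      = Pi.single j 1 := by
  funext i
  simp [Pi.single_apply, Fin.castSucc_inj]

lemma single_last_comp {m : ℕ} :
    (fun i : Fin m => (Pi.single (Fin.last m) (1:ℝ) : Fin (m+1) → ℝ) (Fin.castSucc i))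
      = 0 := by
  funext i
  simp [Pi.single_apply, (Fin.castSucc_lt_last i).ne]

lemma upper_normalized {m : ℕ} {τ : Set (Fin m → ℝ)} {f : (Fin m → ℝ) → ℝ}
    (ℓ : (Fin m → ℝ) →ₗ[ℝ] ℝ) (hfℓ : ∀ w ∈ τ, f w = ℓ w)
    {Lb : Fin m → ((Fin m → ℝ) →ₗ[ℝ] ℝ)} (hLb : IsNormalizedEquations τ Lb) :
    IsNormalizedEquations
      {v : Fin (m+1) → ℝ | (fun i => v i.castSucc) ∈ τ ∧
        f (fun i => v i.castSucc) ≤ v (Fin.last m)}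
      (Fin.snoc (fun i => (Lb i).comp (LinearMap.funLeft ℝ ℝ Fin.castSucc))
        ((LinearMap.proj (Fin.last m)) - ℓ.comp (LinearMap.funLeft ℝ ℝ Fin.castSucc))) := by
  classical
  set M : Fin (m+1) → ((Fin (m+1) → ℝ) →ₗ[ℝ] ℝ) :=
    Fin.snoc (fun i => (Lb i).comp (LinearMap.funLeft ℝ ℝ Fin.castSucc))
      ((LinearMap.proj (Fin.last m)) - ℓ.comp (LinearMap.funLeft ℝ ℝ Fin.castSucc)) with hM
  have hMc : ∀ (i : Fin m) (v : Fin (m+1) → ℝ),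
      M (Fin.castSucc i) v = Lb i (fun j => v (Fin.castSucc j)) := by
    intro i v
    rw [hM, Fin.snoc_castSucc]
    rfl
  have hMl : ∀ (v : Fin (m+1) → ℝ),
      M (Fin.last m) v = v (Fin.last m) - ℓ (fun j => v (Fin.castSucc j)) := by
    intro v
    rw [hM, Fin.snoc_last]
    rfl
  constructor
  · ext v
    simp only [Set.mem_setOf_eq]
    constructor
    · rintro ⟨h1, h2⟩ i
      refine Fin.lastCases ?_ ?_ i
      · rw [hMl, sub_nonneg, ← hfℓ _ h1]
        exact h2
      · intro j
        rw [hMc]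
        have := hLb.1 ▸ h1
        exact this j
    · intro h
      have h1 : (fun i => v i.castSucc) ∈ τ := by
        rw [hLb.1]
        intro j
        have := h (Fin.castSucc j)
        rwa [hMc] at this
      refine ⟨h1, ?_⟩
      have := h (Fin.last m)
      rw [hMl, sub_nonneg] at this
      rwa [hfℓ _ h1]
  · set N : Matrix (Fin (m+1)) (Fin (m+1)) ℝ :=
      Matrix.of fun i j => M i (Pi.single j 1) with hN
    have hNlc : ∀ i : Fin m, N i.castSucc (Fin.last m) = 0 := by
      intro i
      show M i.castSucc (Pi.single (Fin.last m) 1) = 0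
      rw [hMc, single_last_comp, map_zero]
    have hNll : N (Fin.last m) (Fin.last m) = 1 := by
      show M (Fin.last m) (Pi.single (Fin.last m) 1) = 1
      rw [hMl, single_last_comp, map_zero]
      simp
    have hdet : N.det = (Matrix.of fun i j => Lb i (Pi.single j 1)).det := by
      rw [Matrix.det_succ_column N (Fin.last m)]
      rw [Finset.sum_eq_single (Fin.last m)]
      · rw [hNll]
        have hsub : N.submatrix (Fin.last m).succAbove (Fin.last m).succAbove
            = Matrix.of fun i j => Lb i (Pi.single j 1) := by
          ext i j
          rw [Fin.succAbove_last]
          show M i.castSucc (Pi.single j.castSucc 1) = Lb i (Pi.single j 1)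
          rw [hMc, single_castSucc_comp]
        rw [hsub]
        have hsign : ((-1:ℝ))^(((Fin.last m) : ℕ) + ((Fin.last m) : ℕ)) = 1 := by
          rw [← two_mul, pow_mul]
          norm_num
        rw [hsign, one_mul, one_mul]
      · intro i _ hi
        obtain ⟨i', rfl⟩ := Fin.exists_castSucc_eq.mpr hi
        rw [hNlc i']
        ring
      · intro h
        exact absurd (Finset.mem_univ _) h
    rw [hdet]
    exact hLb.2

end AuxLemmas

set_option maxHeartbeats 4000000 in
set_option synthInstance.maxHeartbeats 1000000 in
/-- local–global compatibility of Brion's functionals.  Let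
`Δ = St(ρ)` be the star of a ray `ρ` (the positive `x_{n}`-axis) whose boundary is
the graph of a piecewise linear function `f` over a complete simplicial fan `Φ` in
`V̄ = V/⟨ρ⟩`, and let `ψ = x_n − f`.  Then for every piecewise polynomial `g` on
`Φ`, the Brion functionals (with compatibly normalized volume forms
`Ω_V = dx_n ∧ Ω_V̄`) satisfy `ζ̄(g) = ζ(ψ·p*g)`. -/
theorem local_global_brion {m : ℕ}
    (Φ : Fan (Fin m → ℝ)) (hcomp : Φ.IsComplete) (hsimp : Φ.IsSimplicial)
    -- `f`, the piecewise linear function on `Φ` whose graph is `∂Δ`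
    (f : (Fin m → ℝ) → ℝ)
    (fp : Set (Fin m → ℝ) → MvPolynomial (Fin m) ℝ)
    (hfp : ∀ τ ∈ Φ.cones, (fp τ).IsHomogeneous 1 ∧
      ∀ v ∈ τ, f v = MvPolynomial.eval v (fp τ))
    -- the fan `Δ = St(ρ)`: the cones over the cones of `Φ` together with their
    -- faces in the graph of `f`
    (Δ : Fan (Fin (m + 1) → ℝ)) (hΔsimp : Δ.IsSimplicial)
    (hΔ : (Δ.cones : Set (Set (Fin (m + 1) → ℝ))) =
      {σ | ∃ τ ∈ Φ.cones,
        σ = {v | (fun i => v i.castSucc) ∈ τ ∧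
              f (fun i => v i.castSucc) ≤ v (Fin.last m)} ∨
        σ = {v | (fun i => v i.castSucc) ∈ τ ∧
              v (Fin.last m) = f (fun i => v i.castSucc)}})
    -- normalized facet equations on both fans
    (Lb : Set (Fin m → ℝ) → Fin m → ((Fin m → ℝ) →ₗ[ℝ] ℝ))
    (hLb : ∀ τ ∈ Φ.cones, coneDim τ = m → IsNormalizedEquations τ (Lb τ))
    (L : Set (Fin (m + 1) → ℝ) → Fin (m + 1) → ((Fin (m + 1) → ℝ) →ₗ[ℝ] ℝ))
    (hL : ∀ σ ∈ Δ.cones, coneDim σ = m + 1 → IsNormalizedEquations σ (L σ))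
    -- a piecewise polynomial function `g` on `Φ`
    (g : (Fin m → ℝ) → ℝ)
    (gp : Set (Fin m → ℝ) → MvPolynomial (Fin m) ℝ)
    (hgp : ∀ τ ∈ Φ.cones, ∀ v ∈ τ, g v = MvPolynomial.eval v (gp τ))
    -- a piecewise polynomial representative of `ψ·p*g` on `Δ`
    (q : Set (Fin (m + 1) → ℝ) → MvPolynomial (Fin (m + 1)) ℝ)
    (hq : ∀ σ ∈ Δ.cones, coneDim σ = m + 1 → ∀ v ∈ σ,
      MvPolynomial.eval v (q σ) =
        (v (Fin.last m) - f (fun i => v i.castSucc)) * g (fun i => v i.castSucc))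
    -- `G = ζ̄(g)` and `G' = ζ(ψ·p*g)`
    (G : MvPolynomial (Fin m) ℝ)
    (hG : algebraMap (MvPolynomial (Fin m) ℝ)
        (FractionRing (MvPolynomial (Fin m) ℝ)) G
      = ∑ τ ∈ Φ.cones.filter (fun τ => coneDim τ = m),
          algebraMap (MvPolynomial (Fin m) ℝ) _ (gp τ)
            / algebraMap (MvPolynomial (Fin m) ℝ) _ (facetProd (Lb τ)))
    (G' : MvPolynomial (Fin (m + 1)) ℝ)
    (hG' : algebraMap (MvPolynomial (Fin (m + 1)) ℝ)
        (FractionRing (MvPolynomial (Fin (m + 1)) ℝ)) G'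
      = ∑ σ ∈ Δ.cones.filter (fun σ => coneDim σ = m + 1),
          algebraMap (MvPolynomial (Fin (m + 1)) ℝ) _ (q σ)
            / algebraMap (MvPolynomial (Fin (m + 1)) ℝ) _ (facetProd (L σ))) :
    G' = MvPolynomial.rename Fin.castSucc G := by
  classical
  have hzero_mem : ∀ τ ∈ Φ.cones, (0 : Fin m → ℝ) ∈ τ := by
    intro τ hτ
    obtain ⟨S, hS⟩ := Φ.poly τ hτ
    rw [hS]
    intro Lf _
    simp
  have hlin : ∀ τ, τ ∈ Φ.cones → ∃ ℓ : (Fin m → ℝ) →ₗ[ℝ] ℝ,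
      ∀ v, MvPolynomial.eval v (fp τ) = ℓ v := fun τ hτ => homog_one_linear (hfp τ hτ).1
  choose ℓf hℓf using hlin
  have hfℓ : ∀ (τ) (hτ : τ ∈ Φ.cones), ∀ v ∈ τ, f v = ℓf τ hτ v := by
    intro τ hτ v hv
    rw [(hfp τ hτ).2 v hv, hℓf τ hτ v]
  have hf0 : f 0 = 0 := by
    have h0 : (0 : Fin m → ℝ) ∈ ({0} : Set (Fin m → ℝ)) := rfl
    rw [hfℓ _ Φ.zero_mem 0 h0]
    simp
  set up : Set (Fin m → ℝ) → Set (Fin (m+1) → ℝ) := fun τ =>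
    {v | (fun i => v i.castSucc) ∈ τ ∧ f (fun i => v i.castSucc) ≤ v (Fin.last m)} with hupdef
  have hupΔ : ∀ τ ∈ Φ.cones, up τ ∈ Δ.cones := by
    intro τ hτ
    have : up τ ∈ (Δ.cones : Set (Set (Fin (m + 1) → ℝ))) := by
      rw [hΔ]
      exact ⟨τ, hτ, Or.inl rfl⟩
    exact_mod_cast this
  have hupdim : ∀ τ ∈ Φ.cones, coneDim τ = m → coneDim (up τ) = m + 1 := by
    intro τ hτ hd
    exact dim_upper (hzero_mem τ hτ) hf0 hd
  have hproj_up : ∀ τ : Set (Fin m → ℝ),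
      (fun v : Fin (m+1) → ℝ => (fun i => v i.castSucc)) '' up τ = τ := by
    intro τ
    apply Set.Subset.antisymm
    · rintro w ⟨v, hv, rfl⟩
      exact hv.1
    · intro w hw
      have hpr : (fun i : Fin m => (Fin.snoc w (f w) : Fin (m+1) → ℝ) i.castSucc) = w := by
        funext i; simp
      refine ⟨Fin.snoc w (f w), ⟨?_, ?_⟩, hpr⟩
      · rw [hpr]; exact hw
      · rw [hpr]; simp
  have hrepr : ∀ σ ∈ Δ.cones, coneDim σ = m + 1 →
      ∃ τ ∈ Φ.cones, coneDim τ = m ∧ σ = up τ := by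
    intro σ hσ hdim
    have hσ' : σ ∈ (Δ.cones : Set (Set (Fin (m + 1) → ℝ))) := hσ
    rw [hΔ] at hσ'
    obtain ⟨τ, hτ, hcase⟩ := hσ'
    rcases hcase with hcase | hcase
    · refine ⟨τ, hτ, ?_, hcase⟩
      apply dim_le_of_proj (τ := τ) ?_ hdim
      intro v hv
      rw [hcase] at hv
      exact hv.1
    · exfalso
      apply dim_graph_ne (ℓf τ hτ) (hfℓ τ hτ)
      rw [← hcase]
      exact hdim
  -- the induced map of fraction fields
  have hρinj : Function.Injective
      (⇑((MvPolynomial.rename (Fin.castSucc : Fin m → Fin (m+1))) :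
        MvPolynomial (Fin m) ℝ →ₐ[ℝ] MvPolynomial (Fin (m+1)) ℝ)) :=
    MvPolynomial.rename_injective _ (Fin.castSucc_injective m)
  have hginj : Function.Injective
      (⇑((algebraMap (MvPolynomial (Fin (m+1)) ℝ) (FractionRing (MvPolynomial (Fin (m+1)) ℝ))).comp
        (MvPolynomial.rename (Fin.castSucc : Fin m → Fin (m+1))).toRingHom)) := by
    exact (IsFractionRing.injective (MvPolynomial (Fin (m+1)) ℝ)
      (FractionRing (MvPolynomial (Fin (m+1)) ℝ))).comp hρinj
  set Ψ : FractionRing (MvPolynomial (Fin m) ℝ) →+* FractionRing (MvPolynomial (Fin (m+1)) ℝ) :=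
    IsFractionRing.lift hginj with hΨdef
  have hΨa : ∀ a : MvPolynomial (Fin m) ℝ,
      Ψ (algebraMap (MvPolynomial (Fin m) ℝ) (FractionRing (MvPolynomial (Fin m) ℝ)) a)
        = algebraMap (MvPolynomial (Fin (m+1)) ℝ) (FractionRing (MvPolynomial (Fin (m+1)) ℝ))
            (MvPolynomial.rename Fin.castSucc a) := by
    intro a
    rw [hΨdef, IsFractionRing.lift_algebraMap]
    rfl
  have hamne : ∀ {x : MvPolynomial (Fin (m+1)) ℝ}, x ≠ 0 →
      algebraMap (MvPolynomial (Fin (m+1)) ℝ) (FractionRing (MvPolynomial (Fin (m+1)) ℝ)) x ≠ 0 := by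
    intro x hx h0
    exact hx (IsFractionRing.injective (MvPolynomial (Fin (m+1)) ℝ) _ (by rw [h0, map_zero]))
  -- the per-term identity
  have hterm : ∀ τ, ∀ (hτ : τ ∈ Φ.cones), coneDim τ = m →
      algebraMap (MvPolynomial (Fin (m+1)) ℝ) (FractionRing (MvPolynomial (Fin (m+1)) ℝ)) (q (up τ))
          / algebraMap _ _ (facetProd (L (up τ)))
        = algebraMap (MvPolynomial (Fin (m+1)) ℝ) (FractionRing (MvPolynomial (Fin (m+1)) ℝ))
            (MvPolynomial.rename Fin.castSucc (gp τ))
          / algebraMap _ _ (MvPolynomial.rename Fin.castSucc (facetProd (Lb τ))) := by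
    intro τ hτ hdτ
    have hσmem := hupΔ τ hτ
    have hσdim := hupdim τ hτ hdτ
    have hMnorm := upper_normalized (ℓf τ hτ) (hfℓ τ hτ) (hLb τ hτ hdτ)
    have hLnorm := hL (up τ) hσmem hσdim
    have hFP : facetProd (L (up τ)) = facetProd
        (Fin.snoc (fun i => (Lb τ i).comp (LinearMap.funLeft ℝ ℝ Fin.castSucc))
          ((LinearMap.proj (Fin.last m)) - (ℓf τ hτ).comp (LinearMap.funLeft ℝ ℝ Fin.castSucc))) :=
      facetProd_unique hLnorm hMnorm
    have hden1 : facetProd (L (up τ)) ≠ 0 := by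
      obtain ⟨v, hv⟩ := exists_pos_point hLnorm
      intro h0
      have h1 := eval_facetProd (L (up τ)) v
      rw [h0] at h1
      have h2 : (0:ℝ) < ∏ i, L (up τ) i v := Finset.prod_pos (fun i _ => hv i)
      rw [← h1] at h2
      simp at h2
    have hden2 : facetProd (Lb τ) ≠ 0 := by
      obtain ⟨v, hv⟩ := exists_pos_point (hLb τ hτ hdτ)
      intro h0
      have h1 := eval_facetProd (Lb τ) v
      rw [h0] at h1
      have h2 : (0:ℝ) < ∏ i, Lb τ i v := Finset.prod_pos (fun i _ => hv i)
      rw [← h1] at h2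
      simp at h2
    have hden2' : MvPolynomial.rename (Fin.castSucc : Fin m → Fin (m+1)) (facetProd (Lb τ)) ≠ 0 := by
      intro h0
      exact hden2 (hρinj (by rw [h0, map_zero]))
    rw [div_eq_div_iff (hamne hden1) (hamne hden2')]
    rw [← map_mul, ← map_mul]
    congr 1
    apply eq_of_eval_eq_on_cone hMnorm
    intro v hv
    have hvτ : (fun i => v i.castSucc) ∈ τ := hv.1
    rw [map_mul, map_mul]
    rw [hq (up τ) hσmem hσdim v hv]
    have h1 : MvPolynomial.eval v (MvPolynomial.rename Fin.castSucc (facetProd (Lb τ)))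
        = ∏ i, Lb τ i (fun j => v j.castSucc) := by
      rw [MvPolynomial.eval_rename, eval_facetProd]
      rfl
    have h2 : MvPolynomial.eval v (MvPolynomial.rename Fin.castSucc (gp τ))
        = g (fun j => v j.castSucc) := by
      rw [MvPolynomial.eval_rename]
      exact (hgp τ hτ _ hvτ).symm
    have h3 : MvPolynomial.eval v (facetProd (L (up τ)))
        = (∏ i, Lb τ i (fun j => v j.castSucc))
          * (v (Fin.last m) - ℓf τ hτ (fun j => v j.castSucc)) := by
      rw [hFP, eval_facetProd, Fin.prod_univ_castSucc]
      congr 1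
      · apply Finset.prod_congr rfl
        intro i _
        rw [Fin.snoc_castSucc]
        rfl
      · rw [Fin.snoc_last]
        rfl
    rw [h1, h2, h3, hfℓ τ hτ _ hvτ]
    ring
  -- transport the sum along the bijection between top cones
  have hsum : ∑ σ ∈ Δ.cones.filter (fun σ => coneDim σ = m + 1),
        algebraMap (MvPolynomial (Fin (m+1)) ℝ) (FractionRing (MvPolynomial (Fin (m+1)) ℝ)) (q σ)
          / algebraMap _ _ (facetProd (L σ))
      = ∑ τ ∈ Φ.cones.filter (fun τ => coneDim τ = m),
        algebraMap (MvPolynomial (Fin (m+1)) ℝ) (FractionRing (MvPolynomial (Fin (m+1)) ℝ)) (q (up τ))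
          / algebraMap _ _ (facetProd (L (up τ))) := by
    symm
    apply Finset.sum_bij' (i := fun τ _ => up τ)
      (j := fun σ _ => (fun v : Fin (m+1) → ℝ => (fun i => v i.castSucc)) '' σ)
    · intro τ hτf
      rw [Finset.mem_filter] at hτf ⊢
      exact ⟨hupΔ τ hτf.1, hupdim τ hτf.1 hτf.2⟩
    · intro σ hσf
      rw [Finset.mem_filter] at hσf
      obtain ⟨τ, hτ, hdτ, rfl⟩ := hrepr σ hσf.1 hσf.2
      rw [hproj_up, Finset.mem_filter]
      exact ⟨hτ, hdτ⟩
    · intro τ hτf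
      exact hproj_up τ
    · intro σ hσf
      rw [Finset.mem_filter] at hσf
      obtain ⟨τ, hτ, hdτ, rfl⟩ := hrepr σ hσf.1 hσf.2
      rw [hproj_up]
    · intro τ hτf
      rfl
  apply IsFractionRing.injective (MvPolynomial (Fin (m+1)) ℝ)
    (FractionRing (MvPolynomial (Fin (m+1)) ℝ))
  rw [hG', hsum]
  have hmid : ∑ τ ∈ Φ.cones.filter (fun τ => coneDim τ = m),
      algebraMap (MvPolynomial (Fin (m+1)) ℝ) (FractionRing (MvPolynomial (Fin (m+1)) ℝ)) (q (up τ))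
        / algebraMap _ _ (facetProd (L (up τ)))
      = ∑ τ ∈ Φ.cones.filter (fun τ => coneDim τ = m),
      algebraMap (MvPolynomial (Fin (m+1)) ℝ) (FractionRing (MvPolynomial (Fin (m+1)) ℝ))
          (MvPolynomial.rename Fin.castSucc (gp τ))
        / algebraMap _ _ (MvPolynomial.rename Fin.castSucc (facetProd (Lb τ))) := by
    apply Finset.sum_congr rfl
    intro τ hτf
    rw [Finset.mem_filter] at hτf
    exact hterm τ hτf.1 hτf.2
  rw [hmid]
  have hfinal : ∑ τ ∈ Φ.cones.filter (fun τ => coneDim τ = m),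
      algebraMap (MvPolynomial (Fin (m+1)) ℝ) (FractionRing (MvPolynomial (Fin (m+1)) ℝ))
          (MvPolynomial.rename Fin.castSucc (gp τ))
        / algebraMap _ _ (MvPolynomial.rename Fin.castSucc (facetProd (Lb τ)))
      = Ψ (∑ τ ∈ Φ.cones.filter (fun τ => coneDim τ = m),
          algebraMap (MvPolynomial (Fin m) ℝ) (FractionRing (MvPolynomial (Fin m) ℝ)) (gp τ)
            / algebraMap _ _ (facetProd (Lb τ))) := by
    rw [map_sum]
    apply Finset.sum_congr rfl
    intro τ _
    rw [map_div₀, hΨa, hΨa]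
  rw [hfinal, ← hG, hΨa]
end

section
/- Suppose the A-module Γ(𝓛_Φ) of global sections of the minimal sheaf on a fan Φ has stalk ℝ at the origin, each stalk 𝓛_{Φ,τ} at a cone τ of dimension k ≥ 1 is generated in degrees < k (as graded A-module), and each costalk Γ_{{τ}}𝓛_Φ = ker(𝓛_{Φ,τ} → Γ(∂τ, 𝓛_Φ)) is generated in degrees > k. Then End_{A_Φ}(𝓛_Φ) = ℝ (rigidity: every degree-0 endomorphism of 𝓛_Φ is a scalar). -/
open Set

variable {V : Type} [AddCommGroup V] [Module ℝ V]

/-!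
On the stalk at the origin, which is `ℝ`, a degree-0 endomorphism `φ` is a scalar `c`. If
`φ = c` on the proper faces of a cone `σ` of dimension `k ≥ 1`, then `φ_σ - c` vanishes on
`∂σ`, so it maps `𝓛_σ` into the costalk. Being of degree 0, it sends the generators of `𝓛_σ`,
of degrees `< k`, to elements of the costalk of degree `< k`. These are zero: the costalk is
generated in degrees `> k` and multiplication by `A` does not lower degrees. Induction on `k`.
-/

theorem IsPolyCone.zero_mem {σ : Set V} (hσ : IsPolyCone σ) : (0 : V) ∈ σ := by
  obtain ⟨S, rfl⟩ := hσ
  simp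

theorem eq_singleton_zero_of_coneDim_eq_zero [FiniteDimensional ℝ V] {σ : Set V}
    (h0 : (0 : V) ∈ σ) (h : coneDim σ = 0) : σ = {0} := by
  refine subset_antisymm (fun v hv => ?_) (singleton_subset_iff.mpr h0)
  have hv' : v ∈ Submodule.span ℝ σ := Submodule.subset_span hv
  rwa [Submodule.finrank_eq_zero.mp h, Submodule.mem_bot] at hv'

theorem IsFaceOf.coneDim_lt [FiniteDimensional ℝ V] {ρ τ : Set V} (h : IsFaceOf ρ τ)
    (hne : ρ ≠ τ) : coneDim ρ < coneDim τ := by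
  obtain ⟨L, -, rfl⟩ := h
  obtain ⟨v, hvτ, hLv⟩ : ∃ v ∈ τ, L v ≠ 0 := by
    by_contra! hL
    exact hne (sep_eq_self_iff_mem_true.mpr hL)
  have hker : Submodule.span ℝ {v ∈ τ | L v = 0} ≤ LinearMap.ker L :=
    Submodule.span_le.mpr fun w hw => hw.2
  exact Submodule.finrank_lt_finrank_of_lt (SetLike.lt_iff_le_and_exists.mpr
    ⟨Submodule.span_mono (sep_subset _ _), v, Submodule.subset_span hvτ, fun hv => hLv (hker hv)⟩)

section Graded

variable {ι R : Type*} [CommRing R] {N : Type*} [AddCommGroup N] [Module R N]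
  [Module (MvPolynomial ι R) N] {g : ℕ → Submodule R N}

variable (ι g) in
def IsPolyGraded : Prop :=
  ∀ d, ∀ p ∈ MvPolynomial.homogeneousSubmodule ι R d, ∀ j, ∀ x ∈ g j, p • x ∈ g (j + 2 * d)

variable [IsScalarTower R (MvPolynomial ι R) N]

theorem IsPolyGraded.smul_mem_iSup_gt (hg : IsPolyGraded ι g) (k : ℕ) (p : MvPolynomial ι R)
    {x : N} (hx : x ∈ ⨆ j > k, g j) :
    p • x ∈ ⨆ j > k, g j := by
  have hle : (⨆ j > k, g j) ≤
      (⨆ j > k, g j).comap ((LinearMap.lsmul _ N p).restrictScalars R) := by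
    refine iSup₂_le fun j hj y hy => ?_
    rw [Submodule.mem_comap, LinearMap.restrictScalars_apply, LinearMap.lsmul_apply,
      ← MvPolynomial.sum_homogeneousComponent p, Finset.sum_smul]
    refine Submodule.sum_mem _ fun i _ => ?_
    exact le_iSup₂ (f := fun j (_ : j > k) => g j) (j + 2 * i) (by omega)
      (hg i _ (MvPolynomial.homogeneousComponent_mem i p) j y hy)
  exact hle hx

theorem IsPolyGraded.span_inter_subset_iSup_gt (hg : IsPolyGraded ι g) (k : ℕ) (s : Set N) :
    (Submodule.span (MvPolynomial ι R) (⋃ j ∈ {j | k < j}, s ∩ g j) : Set N) ⊆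
      ((⨆ j > k, g j : Submodule R N) : Set N) := by
  intro x hx
  induction hx using Submodule.span_induction with
  | mem y hy =>
    simp only [mem_iUnion] at hy
    obtain ⟨j, hj, -, hy⟩ := hy
    exact le_iSup₂ (f := fun j (_ : j > k) => g j) j hj hy
  | zero => exact zero_mem _
  | add y z _ _ hy hz => exact add_mem hy hz
  | smul p y _ hy => exact hg.smul_mem_iSup_gt k p hy

theorem LinearMap.eq_zero_of_generated_deg_lt_of_range_deg_gt {M : Type*} [AddCommGroup M]
    [Module R M] [Module (MvPolynomial ι R) M] (hg_indep : iSupIndep g) (hg : IsPolyGraded ι g)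
    {gM : ℕ → Submodule R M} {k : ℕ}
    (hM : (⊤ : Submodule (MvPolynomial ι R) M) =
      Submodule.span (MvPolynomial ι R) (⋃ j ∈ {j | j < k}, (gM j : Set M)))
    (ψ : M →ₗ[MvPolynomial ι R] N) (hψ : ∀ j, ∀ x ∈ gM j, ψ x ∈ g j) (s : Set N)
    (hψs : ∀ x, ψ x ∈ Submodule.span (MvPolynomial ι R) (⋃ j ∈ {j | k < j}, s ∩ g j)) :
    ψ = 0 := by
  have hgen : Submodule.span (MvPolynomial ι R) (⋃ j ∈ {j | j < k}, (gM j : Set M)) ≤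
      LinearMap.ker ψ := by
    refine Submodule.span_le.mpr fun x hx => ?_
    simp only [mem_iUnion] at hx
    obtain ⟨j, hj, hx⟩ := hx
    have hdisj := hg_indep.disjoint_biSup (y := {i | k < i}) (by simpa using hj.le)
    exact Submodule.disjoint_def.mp hdisj _ (hψ j x hx) (hg.span_inter_subset_iSup_gt k s (hψs x))
  exact LinearMap.ker_eq_top.mp (top_le_iff.mp (hM ▸ hgen))

end Graded

section Sheaf

variable {R A : Type*} [CommRing R] [CommRing A] [Algebra R A] {M : Set V → Type*}
  [∀ σ, AddCommGroup (M σ)] [∀ σ, Module A (M σ)] [∀ σ, Module R (M σ)]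
  [∀ σ, IsScalarTower R A (M σ)]

def costalk (r : ∀ σ τ : Set V, IsFaceOf τ σ → M σ →ₗ[A] M τ) (σ : Set V) : Submodule A (M σ) :=
  ⨅ (ρ) (h : IsFaceOf ρ σ ∧ ρ ≠ σ), LinearMap.ker (r σ ρ h.1)

theorem sub_smul_mem_costalk (r : ∀ σ τ : Set V, IsFaceOf τ σ → M σ →ₗ[A] M τ)
    (φ : ∀ σ, M σ →ₗ[A] M σ)
    (hφr : ∀ σ τ (h : IsFaceOf τ σ), (r σ τ h).comp (φ σ) = (φ τ).comp (r σ τ h))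
    (c : R) {σ : Set V} (hface : ∀ ρ, IsFaceOf ρ σ → ρ ≠ σ → ∀ y, φ ρ y = c • y) (x : M σ) :
    (φ σ - c • LinearMap.id : M σ →ₗ[A] M σ) x ∈ costalk r σ := by
  simp only [costalk, Submodule.mem_iInf, LinearMap.mem_ker]
  rintro ρ ⟨hρ, hne⟩
  rw [LinearMap.sub_apply, map_sub, ← LinearMap.comp_apply, hφr, LinearMap.comp_apply,
    hface ρ hρ hne, LinearMap.smul_apply, LinearMap.id_apply, LinearMap.map_smul_of_tower,
    sub_self]

end Sheaf

theorem minimal_sheaf_rigidity_general {n : ℕ} (Φ : Fan (Fin n → ℝ))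
    (M : Set (Fin n → ℝ) → Type)
    [∀ σ, AddCommGroup (M σ)] [∀ σ, Module (MvPolynomial (Fin n) ℝ) (M σ)]
    [∀ σ, Module ℝ (M σ)]
    [∀ σ, IsScalarTower ℝ (MvPolynomial (Fin n) ℝ) (M σ)]
    -- the restriction maps of the sheaf
    (r : ∀ σ τ : Set (Fin n → ℝ), IsFaceOf τ σ →
      (M σ →ₗ[MvPolynomial (Fin n) ℝ] M τ))
    -- the grading of the stalks (linear functions acting in degree 2)
    (g : ∀ σ : Set (Fin n → ℝ), ℕ → Submodule ℝ (M σ))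
    (hgInt : ∀ σ ∈ Φ.cones, DirectSum.IsInternal (g σ))
    (hgSmul : ∀ σ ∈ Φ.cones, ∀ d : ℕ,
      ∀ p ∈ MvPolynomial.homogeneousSubmodule (Fin n) ℝ d,
      ∀ j : ℕ, ∀ x ∈ g σ j, p • x ∈ g σ (j + 2 * d))
    -- the stalk at the origin is `ℝ`, concentrated in degree 0
    (horigin : Module.finrank ℝ (M ({0} : Set (Fin n → ℝ))) = 1 ∧
      g ({0} : Set (Fin n → ℝ)) 0 = ⊤)
    -- the stalk at a cone `τ` of dimension `k ≥ 1` is generated in degrees `< k`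
    (hstalk : ∀ τ ∈ Φ.cones, 1 ≤ coneDim τ →
      (⊤ : Submodule (MvPolynomial (Fin n) ℝ) (M τ)) =
        Submodule.span (MvPolynomial (Fin n) ℝ)
          (⋃ j ∈ {j : ℕ | j < coneDim τ}, (g τ j : Set (M τ))))
    -- the costalk `ker(𝓛_τ → Γ(∂τ,𝓛))` is generated in degrees `> k`
    (hcostalk : ∀ τ ∈ Φ.cones, 1 ≤ coneDim τ →
      (⨅ (ρ : Set (Fin n → ℝ)) (h : IsFaceOf ρ τ ∧ ρ ≠ τ),
          LinearMap.ker (r τ ρ h.1)) =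
        Submodule.span (MvPolynomial (Fin n) ℝ)
          (⋃ j ∈ {j : ℕ | coneDim τ < j},
            (((⨅ (ρ : Set (Fin n → ℝ)) (h : IsFaceOf ρ τ ∧ ρ ≠ τ),
                LinearMap.ker (r τ ρ h.1)) : Submodule (MvPolynomial (Fin n) ℝ)
                  (M τ)) : Set (M τ)) ∩ (g τ j : Set (M τ))))
    -- a degree-0 endomorphism of the sheaf
    (φ : ∀ σ : Set (Fin n → ℝ), M σ →ₗ[MvPolynomial (Fin n) ℝ] M σ)
    (hφr : ∀ σ τ (h : IsFaceOf τ σ), (r σ τ h).comp (φ σ) = (φ τ).comp (r σ τ h))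
    (hφdeg : ∀ σ ∈ Φ.cones, ∀ j : ℕ, ∀ x ∈ g σ j, φ σ x ∈ g σ j) :
    ∃ c : ℝ, ∀ σ ∈ Φ.cones, ∀ x : M σ, φ σ x = c • x := by
  obtain ⟨c, hc, -⟩ :=
    ((φ {0}).restrictScalars ℝ).existsUnique_eq_smul_id_of_finrank_eq_one horigin.1
  refine ⟨c, fun σ hσ => ?_⟩
  induction hk : coneDim σ using Nat.strong_induction_on generalizing σ with
  | _ k ih =>
  obtain rfl | hpos := k.eq_zero_or_pos
  · rw [eq_singleton_zero_of_coneDim_eq_zero (Φ.poly σ hσ).zero_mem hk]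
    exact LinearMap.congr_fun hc
  have hface : ∀ ρ, IsFaceOf ρ σ → ρ ≠ σ → ∀ y, φ ρ y = c • y := fun ρ hρ hne =>
    ih _ (hk ▸ hρ.coneDim_lt hne) ρ (Φ.face_mem σ hσ ρ hρ) rfl
  let ψ : M σ →ₗ[MvPolynomial (Fin n) ℝ] M σ := φ σ - c • LinearMap.id
  have hdeg : ∀ j, ∀ x ∈ g σ j, ψ x ∈ g σ j := fun j x hx =>
    sub_mem (hφdeg σ hσ j x hx) (Submodule.smul_mem _ c hx)
  have hψ := ψ.eq_zero_of_generated_deg_lt_of_range_deg_gt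
    (hgInt σ hσ).submodule_iSupIndep (hgSmul σ hσ) (hstalk σ hσ (hk ▸ hpos)) hdeg _
    fun x => (hcostalk σ hσ (hk ▸ hpos)).le (sub_smul_mem_costalk r φ hφr c hface x)
  exact fun x => sub_eq_zero.mp (LinearMap.congr_fun hψ x)

/-- rigidity of the minimal sheaf.  Let `𝓛 = 𝓛_Φ` be a sheaf of
graded `A_Φ`-modules on a fan `Φ` (given by its graded stalks `M σ` and restriction
maps `r`), whose stalk at the origin is `ℝ` (one-dimensional, in degree `0`), whose
stalk at every cone `τ` of dimension `k ≥ 1` is generated in degrees `< k`, and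
whose costalk `ker(𝓛_τ → Γ(∂τ, 𝓛))` at every such `τ` is generated in degrees
`> k`.  Then every degree-`0` endomorphism of `𝓛_Φ` is multiplication by a scalar:
`End_{A_Φ}(𝓛_Φ) = ℝ`.  (Degrees are normalized so that linear functions in
`A = Sym(V*)` have degree `2`.) -/
theorem minimal_sheaf_rigidity {n : ℕ} (Φ : Fan (Fin n → ℝ))
    (M : Set (Fin n → ℝ) → Type)
    [∀ σ, AddCommGroup (M σ)] [∀ σ, Module (MvPolynomial (Fin n) ℝ) (M σ)]
    [∀ σ, Module ℝ (M σ)]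
    [∀ σ, IsScalarTower ℝ (MvPolynomial (Fin n) ℝ) (M σ)]
    -- the restriction maps of the sheaf
    (r : ∀ σ τ : Set (Fin n → ℝ), IsFaceOf τ σ →
      (M σ →ₗ[MvPolynomial (Fin n) ℝ] M τ))
    (hr_id : ∀ σ (h : IsFaceOf σ σ), r σ σ h = LinearMap.id)
    (hr_comp : ∀ σ τ ρ (h1 : IsFaceOf τ σ) (h2 : IsFaceOf ρ τ)
      (h3 : IsFaceOf ρ σ), (r τ ρ h2).comp (r σ τ h1) = r σ ρ h3)
    -- the grading of the stalks (linear functions acting in degree 2)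
    (g : ∀ σ : Set (Fin n → ℝ), ℕ → Submodule ℝ (M σ))
    (hgInt : ∀ σ ∈ Φ.cones, DirectSum.IsInternal (g σ))
    (hgSmul : ∀ σ ∈ Φ.cones, ∀ d : ℕ,
      ∀ p ∈ MvPolynomial.homogeneousSubmodule (Fin n) ℝ d,
      ∀ j : ℕ, ∀ x ∈ g σ j, p • x ∈ g σ (j + 2 * d))
    -- the stalk at the origin is `ℝ`, concentrated in degree 0
    (horigin : Module.finrank ℝ (M ({0} : Set (Fin n → ℝ))) = 1 ∧
      g ({0} : Set (Fin n → ℝ)) 0 = ⊤)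
    -- the stalk at a cone `τ` of dimension `k ≥ 1` is generated in degrees `< k`
    (hstalk : ∀ τ ∈ Φ.cones, 1 ≤ coneDim τ →
      (⊤ : Submodule (MvPolynomial (Fin n) ℝ) (M τ)) =
        Submodule.span (MvPolynomial (Fin n) ℝ)
          (⋃ j ∈ {j : ℕ | j < coneDim τ}, (g τ j : Set (M τ))))
    -- the costalk `ker(𝓛_τ → Γ(∂τ,𝓛))` is generated in degrees `> k`
    (hcostalk : ∀ τ ∈ Φ.cones, 1 ≤ coneDim τ →
      (⨅ (ρ : Set (Fin n → ℝ)) (h : IsFaceOf ρ τ ∧ ρ ≠ τ),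
          LinearMap.ker (r τ ρ h.1)) =
        Submodule.span (MvPolynomial (Fin n) ℝ)
          (⋃ j ∈ {j : ℕ | coneDim τ < j},
            (((⨅ (ρ : Set (Fin n → ℝ)) (h : IsFaceOf ρ τ ∧ ρ ≠ τ),
                LinearMap.ker (r τ ρ h.1)) : Submodule (MvPolynomial (Fin n) ℝ)
                  (M τ)) : Set (M τ)) ∩ (g τ j : Set (M τ))))
    -- a degree-0 endomorphism of the sheaf
    (φ : ∀ σ : Set (Fin n → ℝ), M σ →ₗ[MvPolynomial (Fin n) ℝ] M σ)
    (hφr : ∀ σ τ (h : IsFaceOf τ σ), (r σ τ h).comp (φ σ) = (φ τ).comp (r σ τ h))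
    (hφdeg : ∀ σ ∈ Φ.cones, ∀ j : ℕ, ∀ x ∈ g σ j, φ σ x ∈ g σ j) :
    ∃ c : ℝ, ∀ σ ∈ Φ.cones, ∀ x : M σ, φ σ x = c • x :=
  minimal_sheaf_rigidity_general Φ M r g hgInt hgSmul horigin hstalk hcostalk φ hφr hφdeg
end
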